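/- Let Ξ ⊆ ℝ × (0,∞) × ℝ × (0,∞) be open and let u₁, v₁, u₂, v₂ : ℝ⁴ → ℝ be C^∞ on Ξ (arguments denoted (x₀, r, y₀, ρ)) satisfying on Ξ the Cauchy–Riemann systems: ∂₁u₁ = ∂₂v₁, ∂₂u₁ = −∂₁v₁; ∂₁u₂ = ∂₂v₂, ∂₂u₂ = −∂₁v₂; ∂₃u₁ = ∂₄u₂, ∂₄u₁ = −∂₃u₂; ∂₃v₁ = ∂₄v₂, ∂₄v₁ = −∂₃v₂. Fix natural numbers n, n' ≥ 1 and set A = D_r(n)D_ρ(n'){u₁}, B = D'_r(n)D_ρ(n'){v₁}, C = D_r(n)D'_ρ(n'){u₂}, D = D'_r(n)D'_ρ(n'){v₂}. Then at every point (x₀, r, y₀, ρ) ∈ Ξ the following eight identities hold: ∂₁A − ∂₂B = (2n/r)·B; ∂₁B + ∂₂A = 0; ∂₁C − ∂₂D = (2n/r)·D; ∂₁D + ∂₂C = 0; ∂₃A − ∂₄C = (2n'/ρ)·C; ∂₃C + ∂₄A = 0; ∂₃B − ∂₄D = (2n'/ρ)·D; ∂₃D + ∂₄B = 0. -/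

import Mathlib

/-- The operator `D(n){f} = ((1/t) d/dt)^n f`:
`D(0){f} = f` and `D(n+1){f}(t) = (d/dt D(n){f})(t) / t`. -/
noncomputable def Dlow : ℕ → (ℝ → ℝ) → (ℝ → ℝ)
  | 0, f => f
  | n + 1, f => fun t => deriv (Dlow n f) t / t

/-- The operator `D'(n)`: `D'(0){f} = f` and `D'(n+1){f}(t) = d/dt (D'(n){f}(t) / t)`. -/
noncomputable def Dup : ℕ → (ℝ → ℝ) → (ℝ → ℝ)
  | 0, f => f
  | n + 1, f => deriv (fun t => Dup n f t / t)

/-- Partial derivative in the first argument `x₀` of a function on `ℝ⁴`. -/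
noncomputable def P1 (F : ℝ × ℝ × ℝ × ℝ → ℝ) (p : ℝ × ℝ × ℝ × ℝ) : ℝ :=
  deriv (fun s => F (s, p.2.1, p.2.2.1, p.2.2.2)) p.1

/-- Partial derivative in the second argument `r`. -/
noncomputable def P2 (F : ℝ × ℝ × ℝ × ℝ → ℝ) (p : ℝ × ℝ × ℝ × ℝ) : ℝ :=
  deriv (fun s => F (p.1, s, p.2.2.1, p.2.2.2)) p.2.1

/-- Partial derivative in the third argument `y₀`. -/
noncomputable def P3 (F : ℝ × ℝ × ℝ × ℝ → ℝ) (p : ℝ × ℝ × ℝ × ℝ) : ℝ :=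
  deriv (fun s => F (p.1, p.2.1, s, p.2.2.2)) p.2.2.1

/-- Partial derivative in the fourth argument `ρ`. -/
noncomputable def P4 (F : ℝ × ℝ × ℝ × ℝ → ℝ) (p : ℝ × ℝ × ℝ × ℝ) : ℝ :=
  deriv (fun s => F (p.1, p.2.1, p.2.2.1, s)) p.2.2.2

/-- `D_r(n)` applied in the second argument `r`. -/
noncomputable def DrLow (n : ℕ) (F : ℝ × ℝ × ℝ × ℝ → ℝ) (p : ℝ × ℝ × ℝ × ℝ) : ℝ :=
  Dlow n (fun s => F (p.1, s, p.2.2.1, p.2.2.2)) p.2.1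

/-- `D'_r(n)` applied in the second argument `r`. -/
noncomputable def DrUp (n : ℕ) (F : ℝ × ℝ × ℝ × ℝ → ℝ) (p : ℝ × ℝ × ℝ × ℝ) : ℝ :=
  Dup n (fun s => F (p.1, s, p.2.2.1, p.2.2.2)) p.2.1

/-- `D_ρ(n')` applied in the fourth argument `ρ`. -/
noncomputable def DρLow (n : ℕ) (F : ℝ × ℝ × ℝ × ℝ → ℝ) (p : ℝ × ℝ × ℝ × ℝ) : ℝ :=
  Dlow n (fun s => F (p.1, p.2.1, p.2.2.1, s)) p.2.2.2

/-- `D'_ρ(n')` applied in the fourth argument `ρ`. -/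
noncomputable def DρUp (n : ℕ) (F : ℝ × ℝ × ℝ × ℝ → ℝ) (p : ℝ × ℝ × ℝ × ℝ) : ℝ :=
  Dup n (fun s => F (p.1, p.2.1, p.2.2.1, s)) p.2.2.2

open Topology Filter

section Aux

abbrev R4 := ℝ × ℝ × ℝ × ℝ

noncomputable def Pv (v : R4) (F : R4 → ℝ) (p : R4) : ℝ :=
  deriv (fun s : ℝ => F (p + s • v)) 0

lemma hasDerivAt_line (p v : R4) (s : ℝ) : HasDerivAt (fun t : ℝ => p + t • v) v s := by
  simpa using ((hasDerivAt_id s).smul_const v).const_add p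

lemma Pv_eq {F : R4 → ℝ} {p : R4} (hF : DifferentiableAt ℝ F p) (v : R4) :
    Pv v F p = fderiv ℝ F p v := by
  have h0 : HasFDerivAt F (fderiv ℝ F p) ((fun t : ℝ => p + t • v) 0) := by
    simpa using hF.hasFDerivAt
  exact (h0.comp_hasDerivAt 0 (hasDerivAt_line p v 0)).deriv

def e1 : R4 := (1,0,0,0)
def e2 : R4 := (0,1,0,0)
def e3 : R4 := (0,0,1,0)
def e4 : R4 := (0,0,0,1)

lemma P1_pv (F : R4 → ℝ) : P1 F = Pv e1 F := by
  funext p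
  have h : (fun s : ℝ => F (p + s • e1)) = fun s => F (p.1 + s, p.2.1, p.2.2.1, p.2.2.2) := by
    funext s
    have : p + s • e1 = (p.1 + s, p.2.1, p.2.2.1, p.2.2.2) := by
      simp [e1, Prod.ext_iff]
    rw [this]
  rw [P1, Pv, h, deriv_comp_const_add (fun t => F (t, p.2.1, p.2.2.1, p.2.2.2)) p.1 0, add_zero]

lemma P2_pv (F : R4 → ℝ) : P2 F = Pv e2 F := by
  funext p
  have h : (fun s : ℝ => F (p + s • e2)) = fun s => F (p.1, p.2.1 + s, p.2.2.1, p.2.2.2) := by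
    funext s
    have : p + s • e2 = (p.1, p.2.1 + s, p.2.2.1, p.2.2.2) := by
      simp [e2, Prod.ext_iff]
    rw [this]
  rw [P2, Pv, h, deriv_comp_const_add (fun t => F (p.1, t, p.2.2.1, p.2.2.2)) p.2.1 0, add_zero]

lemma P3_pv (F : R4 → ℝ) : P3 F = Pv e3 F := by
  funext p
  have h : (fun s : ℝ => F (p + s • e3)) = fun s => F (p.1, p.2.1, p.2.2.1 + s, p.2.2.2) := by
    funext s
    have : p + s • e3 = (p.1, p.2.1, p.2.2.1 + s, p.2.2.2) := by
      simp [e3, Prod.ext_iff]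
    rw [this]
  rw [P3, Pv, h, deriv_comp_const_add (fun t => F (p.1, p.2.1, t, p.2.2.2)) p.2.2.1 0, add_zero]

lemma P4_pv (F : R4 → ℝ) : P4 F = Pv e4 F := by
  funext p
  have h : (fun s : ℝ => F (p + s • e4)) = fun s => F (p.1, p.2.1, p.2.2.1, p.2.2.2 + s) := by
    funext s
    have : p + s • e4 = (p.1, p.2.1, p.2.2.1, p.2.2.2 + s) := by
      simp [e4, Prod.ext_iff]
    rw [this]
  rw [P4, Pv, h, deriv_comp_const_add (fun t => F (p.1, p.2.1, p.2.2.1, t)) p.2.2.2 0, add_zero]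

lemma clairautPv {Ξ : Set R4} (hΞ : IsOpen Ξ) {F : R4 → ℝ} (hF : ContDiffOn ℝ (⊤ : ℕ∞) F Ξ)
    {p : R4} (hp : p ∈ Ξ) (v w : R4) : Pv v (Pv w F) p = Pv w (Pv v F) p := by
  have hdiff : ∀ q ∈ Ξ, DifferentiableAt ℝ F q := fun q hq =>
    (hF.contDiffAt (hΞ.mem_nhds hq)).differentiableAt (by simp)
  have hg : DifferentiableAt ℝ (fderiv ℝ F) p :=
    (((hF.contDiffAt (hΞ.mem_nhds hp)).fderiv_right (m := 1) (by exact (WithTop.coe_le_coe.mpr (le_top : ((1 + 1 : ℕ) : ℕ∞) ≤ ⊤)))).differentiableAt one_ne_zero)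
  have main : ∀ a b : R4, Pv a (Pv b F) p = fderiv ℝ (fderiv ℝ F) p a b := by
    intro a b
    have hc : Continuous (fun s : ℝ => p + s • a) := by fun_prop
    have hev : ∀ᶠ s in 𝓝 (0:ℝ), p + s • a ∈ Ξ := by
      have := hc.continuousAt.preimage_mem_nhds (x := (0:ℝ)) (by simpa using hΞ.mem_nhds hp)
      exact this
    have hEv : (fun s : ℝ => Pv b F (p + s • a)) =ᶠ[𝓝 (0:ℝ)]
        (fun s => fderiv ℝ F (p + s • a) b) := by
      filter_upwards [hev] with s hs using Pv_eq (hdiff _ hs) b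
    rw [Pv, hEv.deriv_eq]
    have h1 : HasDerivAt (fun s : ℝ => fderiv ℝ F (p + s • a)) (fderiv ℝ (fderiv ℝ F) p a) 0 := by
      have h0 : HasFDerivAt (fderiv ℝ F) (fderiv ℝ (fderiv ℝ F) p) ((fun t : ℝ => p + t • a) 0) := by
        simpa using hg.hasFDerivAt
      exact h0.comp_hasDerivAt 0 (hasDerivAt_line p a 0)
    have h2 : HasDerivAt (fun s : ℝ => fderiv ℝ F (p + s • a) b)
        (fderiv ℝ (fderiv ℝ F) p a b) 0 := by
      simpa using h1.clm_apply (hasDerivAt_const 0 b)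
    exact h2.deriv
  rw [main v w, main w v]
  have hf : ∀ᶠ y in 𝓝 p, HasFDerivAt F (fderiv ℝ F y) y := by
    filter_upwards [hΞ.mem_nhds hp] with q hq using (hdiff q hq).hasFDerivAt
  exact second_derivative_symmetric_of_eventually hf hg.hasFDerivAt v w

section Comm
variable {Ξ : Set R4} {F : R4 → ℝ} {p : R4}

lemma comm12 (hΞ : IsOpen Ξ) (hF : ContDiffOn ℝ (⊤ : ℕ∞) F Ξ) (hp : p ∈ Ξ) :
    P1 (P2 F) p = P2 (P1 F) p := by
  simp only [P1_pv, P2_pv]; exact clairautPv hΞ hF hp e1 e2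

lemma comm23 (hΞ : IsOpen Ξ) (hF : ContDiffOn ℝ (⊤ : ℕ∞) F Ξ) (hp : p ∈ Ξ) :
    P3 (P2 F) p = P2 (P3 F) p := by
  simp only [P3_pv, P2_pv]; exact clairautPv hΞ hF hp e3 e2

lemma comm24 (hΞ : IsOpen Ξ) (hF : ContDiffOn ℝ (⊤ : ℕ∞) F Ξ) (hp : p ∈ Ξ) :
    P4 (P2 F) p = P2 (P4 F) p := by
  simp only [P4_pv, P2_pv]; exact clairautPv hΞ hF hp e4 e2

end Comm

section Slice
variable {Ξ : Set R4} {F G H : R4 → ℝ} {p : R4}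

lemma slice2_diff' (hF : DifferentiableAt ℝ F p) :
    DifferentiableAt ℝ (fun s => F (p.1, s, p.2.2.1, p.2.2.2)) p.2.1 := by
  have hι : DifferentiableAt ℝ (fun s : ℝ => ((p.1, s, p.2.2.1, p.2.2.2) : R4)) p.2.1 := by
    fun_prop
  exact DifferentiableAt.comp _ hF hι

lemma slice2_diff (hΞ : IsOpen Ξ) (hF : ContDiffOn ℝ (⊤ : ℕ∞) F Ξ) (hp : p ∈ Ξ) :
    DifferentiableAt ℝ (fun s => F (p.1, s, p.2.2.1, p.2.2.2)) p.2.1 :=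
  slice2_diff' ((hF.contDiffAt (hΞ.mem_nhds hp)).differentiableAt (by simp))

lemma P2_congr (hΞ : IsOpen Ξ) (hp : p ∈ Ξ) (h : ∀ q ∈ Ξ, G q = H q) :
    P2 G p = P2 H p := by
  apply Filter.EventuallyEq.deriv_eq
  have hι : Continuous (fun s : ℝ => ((p.1, s, p.2.2.1, p.2.2.2) : R4)) := by fun_prop
  have hev : ∀ᶠ s in 𝓝 p.2.1, ((p.1, s, p.2.2.1, p.2.2.2) : R4) ∈ Ξ :=
    hι.continuousAt.preimage_mem_nhds (hΞ.mem_nhds hp)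
  filter_upwards [hev] with s hs using h _ hs

lemma contDiffOn_Pv (hΞ : IsOpen Ξ) (hF : ContDiffOn ℝ (⊤ : ℕ∞) F Ξ) (v : R4) :
    ContDiffOn ℝ (⊤ : ℕ∞) (Pv v F) Ξ := by
  have h1 : ContDiffOn ℝ (⊤ : ℕ∞) (fderiv ℝ F) Ξ := hF.fderiv_of_isOpen hΞ (m := (⊤ : ℕ∞)) (by simp)
  have h := h1.clm_apply (contDiffOn_const (c := v))
  apply h.congr
  intro q hq
  exact Pv_eq ((hF.contDiffAt (hΞ.mem_nhds hq)).differentiableAt (by simp)) v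

lemma contDiffOn_P2 (hΞ : IsOpen Ξ) (hF : ContDiffOn ℝ (⊤ : ℕ∞) F Ξ) :
    ContDiffOn ℝ (⊤ : ℕ∞) (P2 F) Ξ := by
  rw [P2_pv]; exact contDiffOn_Pv hΞ hF e2

lemma contDiffOn_P4 (hΞ : IsOpen Ξ) (hF : ContDiffOn ℝ (⊤ : ℕ∞) F Ξ) :
    ContDiffOn ℝ (⊤ : ℕ∞) (P4 F) Ξ := by
  rw [P4_pv]; exact contDiffOn_Pv hΞ hF e4

end Slice

lemma DrLow_zero (F : R4 → ℝ) : DrLow 0 F = F := rfl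
lemma DrUp_zero (F : R4 → ℝ) : DrUp 0 F = F := rfl
lemma DrLow_succ (n : ℕ) (F : R4 → ℝ) :
    DrLow (n+1) F = fun p => P2 (DrLow n F) p / p.2.1 := rfl
lemma DrUp_succ (n : ℕ) (F : R4 → ℝ) :
    DrUp (n+1) F = fun p => P2 (fun q => DrUp n F q / q.2.1) p := rfl

section DrSmooth
variable {Ξ : Set R4} {F G H : R4 → ℝ} {p : R4}

lemma contDiff_coord21 : ContDiff ℝ (⊤ : ℕ∞) (fun q : R4 => q.2.1) := by fun_prop

lemma contDiffOn_DrLow (hΞ : IsOpen Ξ) (hsub : ∀ q ∈ Ξ, q.2.1 ≠ 0)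
    (hF : ContDiffOn ℝ (⊤ : ℕ∞) F Ξ) (n : ℕ) : ContDiffOn ℝ (⊤ : ℕ∞) (DrLow n F) Ξ := by
  induction n with
  | zero => rw [DrLow_zero]; exact hF
  | succ n ih =>
    rw [DrLow_succ]
    exact (contDiffOn_P2 hΞ ih).div contDiff_coord21.contDiffOn hsub

lemma contDiffOn_DrUp (hΞ : IsOpen Ξ) (hsub : ∀ q ∈ Ξ, q.2.1 ≠ 0)
    (hF : ContDiffOn ℝ (⊤ : ℕ∞) F Ξ) (n : ℕ) : ContDiffOn ℝ (⊤ : ℕ∞) (DrUp n F) Ξ := by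
  induction n with
  | zero => rw [DrUp_zero]; exact hF
  | succ n ih =>
    rw [DrUp_succ]
    exact contDiffOn_P2 hΞ (ih.div contDiff_coord21.contDiffOn hsub)

/-- `P1` of a function divided by the second coordinate. -/
lemma P1_div21 (G : R4 → ℝ) (p : R4) :
    P1 (fun q => G q / q.2.1) p = P1 G p / p.2.1 :=
  deriv_div_const _

/-- `P3` of a function divided by the second coordinate. -/
lemma P3_div21 (G : R4 → ℝ) (p : R4) :
    P3 (fun q => G q / q.2.1) p = P3 G p / p.2.1 :=
  deriv_div_const _

/-- `P2` of a sum. -/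
lemma P2_add (hG : DifferentiableAt ℝ (fun s => G (p.1, s, p.2.2.1, p.2.2.2)) p.2.1)
    (hH : DifferentiableAt ℝ (fun s => H (p.1, s, p.2.2.1, p.2.2.2)) p.2.1) :
    P2 (fun q => G q + H q) p = P2 G p + P2 H p :=
  deriv_add hG hH

/-- `P2` of a negation. -/
lemma P2_neg (G : R4 → ℝ) (p : R4) : P2 (fun q => -G q) p = -P2 G p :=
  deriv.neg

/-- `P2` of a constant multiple. -/
lemma P2_cmul (c : ℝ) (G : R4 → ℝ) (p : R4) : P2 (fun q => c * G q) p = c * P2 G p :=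
  deriv_const_mul_field c

/-- `P2` of a quotient by the second coordinate. -/
lemma P2_div21 (hr : p.2.1 ≠ 0)
    (hG : DifferentiableAt ℝ (fun s => G (p.1, s, p.2.2.1, p.2.2.2)) p.2.1) :
    P2 (fun q => G q / q.2.1) p = (P2 G p * p.2.1 - G p) / p.2.1 ^ 2 := by
  have h := deriv_div hG differentiableAt_fun_id hr
  rw [deriv_id'', mul_one] at h
  exact h

/-- `P2` of a quotient by the square of the second coordinate. -/
lemma P2_div21sq (hr : p.2.1 ≠ 0)
    (hG : DifferentiableAt ℝ (fun s => G (p.1, s, p.2.2.1, p.2.2.2)) p.2.1) :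
    P2 (fun q => G q / q.2.1 ^ 2) p
      = (P2 G p * p.2.1 ^ 2 - G p * (2 * p.2.1)) / (p.2.1 ^ 2) ^ 2 := by
  have h := deriv_div hG (differentiableAt_pow 2) (pow_ne_zero 2 hr) (x := p.2.1)
  have h2 : deriv (fun x : ℝ => x ^ 2) p.2.1 = 2 * p.2.1 := by
    rw [deriv_pow_field]; norm_num
  rw [h2] at h
  exact h

/-- `P2` of `c/r * G`. -/
lemma P2_cdiv_mul (c : ℝ) (hr : p.2.1 ≠ 0)
    (hG : DifferentiableAt ℝ (fun s => G (p.1, s, p.2.2.1, p.2.2.2)) p.2.1) :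
    P2 (fun q => c / q.2.1 * G q) p
      = -(c / p.2.1 ^ 2) * G p + c / p.2.1 * P2 G p := by
  have hc : DifferentiableAt ℝ (fun s : ℝ => c / s) p.2.1 :=
    (differentiableAt_const c).div differentiableAt_fun_id hr
  have h := deriv_fun_mul hc hG (x := p.2.1)
  have hcd : deriv (fun s : ℝ => c / s) p.2.1 = -(c / p.2.1 ^ 2) := by
    rw [deriv_fun_div (differentiableAt_const c) differentiableAt_fun_id hr, deriv_id'', deriv_const]
    ring
  rw [hcd] at h
  exact h

end DrSmooth

section DrOps
variable {Ξ : Set R4} {F G H : R4 → ℝ}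

lemma DrLow_congr (hΞ : IsOpen Ξ) (h : ∀ q ∈ Ξ, G q = H q) (n : ℕ) :
    ∀ p ∈ Ξ, DrLow n G p = DrLow n H p := by
  induction n with
  | zero => exact h
  | succ n ih =>
    intro p hp
    simp only [DrLow_succ]
    rw [P2_congr hΞ hp ih]

lemma DrUp_congr (hΞ : IsOpen Ξ) (h : ∀ q ∈ Ξ, G q = H q) (n : ℕ) :
    ∀ p ∈ Ξ, DrUp n G p = DrUp n H p := by
  induction n with
  | zero => exact h
  | succ n ih =>
    intro p hp
    simp only [DrUp_succ]
    exact P2_congr hΞ hp (fun q hq => by rw [ih q hq])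

lemma DrLow_add (hΞ : IsOpen Ξ) (hsub : ∀ q ∈ Ξ, q.2.1 ≠ 0)
    (hG : ContDiffOn ℝ (⊤ : ℕ∞) G Ξ) (hH : ContDiffOn ℝ (⊤ : ℕ∞) H Ξ) (n : ℕ) :
    ∀ p ∈ Ξ, DrLow n (fun q => G q + H q) p = DrLow n G p + DrLow n H p := by
  induction n with
  | zero => intro p hp; rfl
  | succ n ih =>
    intro p hp
    simp only [DrLow_succ]
    rw [P2_congr hΞ hp ih,
      P2_add (slice2_diff hΞ (contDiffOn_DrLow hΞ hsub hG n) hp)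
        (slice2_diff hΞ (contDiffOn_DrLow hΞ hsub hH n) hp), add_div]

lemma DrUp_add (hΞ : IsOpen Ξ) (hsub : ∀ q ∈ Ξ, q.2.1 ≠ 0)
    (hG : ContDiffOn ℝ (⊤ : ℕ∞) G Ξ) (hH : ContDiffOn ℝ (⊤ : ℕ∞) H Ξ) (n : ℕ) :
    ∀ p ∈ Ξ, DrUp n (fun q => G q + H q) p = DrUp n G p + DrUp n H p := by
  induction n with
  | zero => intro p hp; rfl
  | succ n ih =>
    intro p hp
    simp only [DrUp_succ]
    rw [P2_congr hΞ hp (fun q hq => by rw [ih q hq, add_div])]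
    exact P2_add
      ((slice2_diff hΞ (contDiffOn_DrUp hΞ hsub hG n) hp).div differentiableAt_fun_id
        (hsub p hp))
      ((slice2_diff hΞ (contDiffOn_DrUp hΞ hsub hH n) hp).div differentiableAt_fun_id
        (hsub p hp))

lemma DrLow_smul (hΞ : IsOpen Ξ) (c : ℝ → ℝ) (n : ℕ) :
    ∀ p ∈ Ξ, DrLow n (fun q => c q.2.2.2 * G q) p = c p.2.2.2 * DrLow n G p := by
  induction n with
  | zero => intro p hp; rfl
  | succ n ih =>
    intro p hp
    simp only [DrLow_succ]
    rw [P2_congr hΞ hp ih]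
    have : P2 (fun q => c p.2.2.2 * DrLow n G q) p = c p.2.2.2 * P2 (DrLow n G) p :=
      P2_cmul _ _ _
    rw [show P2 (fun q => c q.2.2.2 * DrLow n G q) p
        = P2 (fun q => c p.2.2.2 * DrLow n G q) p from rfl, this, mul_div_assoc]

lemma DrUp_smul (hΞ : IsOpen Ξ) (c : ℝ → ℝ) (n : ℕ) {G : R4 → ℝ} :
    ∀ p ∈ Ξ, DrUp n (fun q => c q.2.2.2 * G q) p = c p.2.2.2 * DrUp n G p := by
  induction n with
  | zero => intro p hp; rfl
  | succ n ih =>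
    intro p hp
    simp only [DrUp_succ]
    rw [P2_congr hΞ hp (fun q hq => by rw [ih q hq, mul_div_assoc])]
    exact (P2_cmul (c p.2.2.2) (fun q => DrUp n G q / q.2.1) p).trans rfl

lemma DrLow_neg (hΞ : IsOpen Ξ) (n : ℕ) :
    ∀ p ∈ Ξ, DrLow n (fun q => -G q) p = -DrLow n G p := by
  intro p hp
  have h1 : ∀ q ∈ Ξ, -G q = (fun t : ℝ => (-1 : ℝ)) q.2.2.2 * G q := by
    intro q _; simp
  rw [DrLow_congr hΞ h1 n p hp, DrLow_smul hΞ (fun _ => (-1:ℝ)) n p hp]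
  ring

lemma DrUp_neg (hΞ : IsOpen Ξ) (n : ℕ) :
    ∀ p ∈ Ξ, DrUp n (fun q => -G q) p = -DrUp n G p := by
  intro p hp
  have h1 : ∀ q ∈ Ξ, -G q = (fun t : ℝ => (-1 : ℝ)) q.2.2.2 * G q := by
    intro q _; simp
  rw [DrUp_congr hΞ h1 n p hp, DrUp_smul hΞ (fun _ => (-1:ℝ)) n p hp]
  ring

lemma commP3_DrLow (hΞ : IsOpen Ξ) (hsub : ∀ q ∈ Ξ, q.2.1 ≠ 0)
    (hF : ContDiffOn ℝ (⊤ : ℕ∞) F Ξ) (n : ℕ) :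
    ∀ p ∈ Ξ, P3 (DrLow n F) p = DrLow n (P3 F) p := by
  induction n with
  | zero => intro p hp; rfl
  | succ n ih =>
    intro p hp
    simp only [DrLow_succ]
    calc P3 (fun q => P2 (DrLow n F) q / q.2.1) p
        = P3 (P2 (DrLow n F)) p / p.2.1 := P3_div21 _ _
      _ = P2 (P3 (DrLow n F)) p / p.2.1 := by
          rw [comm23 hΞ (contDiffOn_DrLow hΞ hsub hF n) hp]
      _ = P2 (DrLow n (P3 F)) p / p.2.1 := by rw [P2_congr hΞ hp ih]

lemma commP4_DrLow (hΞ : IsOpen Ξ) (hsub : ∀ q ∈ Ξ, q.2.1 ≠ 0)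
    (hF : ContDiffOn ℝ (⊤ : ℕ∞) F Ξ) (n : ℕ) :
    ∀ p ∈ Ξ, P4 (DrLow n F) p = DrLow n (P4 F) p := by
  induction n with
  | zero => intro p hp; rfl
  | succ n ih =>
    intro p hp
    simp only [DrLow_succ]
    calc P4 (fun q => P2 (DrLow n F) q / q.2.1) p
        = P4 (P2 (DrLow n F)) p / p.2.1 := deriv_div_const _
      _ = P2 (P4 (DrLow n F)) p / p.2.1 := by
          rw [comm24 hΞ (contDiffOn_DrLow hΞ hsub hF n) hp]
      _ = P2 (DrLow n (P4 F)) p / p.2.1 := by rw [P2_congr hΞ hp ih]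

lemma commP3_DrUp (hΞ : IsOpen Ξ) (hsub : ∀ q ∈ Ξ, q.2.1 ≠ 0)
    (hF : ContDiffOn ℝ (⊤ : ℕ∞) F Ξ) (n : ℕ) :
    ∀ p ∈ Ξ, P3 (DrUp n F) p = DrUp n (P3 F) p := by
  induction n with
  | zero => intro p hp; rfl
  | succ n ih =>
    intro p hp
    simp only [DrUp_succ]
    have hW : ContDiffOn ℝ (⊤ : ℕ∞) (fun q => DrUp n F q / q.2.1) Ξ :=
      (contDiffOn_DrUp hΞ hsub hF n).div contDiff_coord21.contDiffOn hsub
    calc P3 (P2 (fun q => DrUp n F q / q.2.1)) p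
        = P2 (P3 (fun q => DrUp n F q / q.2.1)) p := comm23 hΞ hW hp
      _ = P2 (fun q => DrUp n (P3 F) q / q.2.1) p := by
          refine P2_congr hΞ hp (fun q hq => ?_)
          rw [P3_div21, ih q hq]

lemma commP4_DrUp (hΞ : IsOpen Ξ) (hsub : ∀ q ∈ Ξ, q.2.1 ≠ 0)
    (hF : ContDiffOn ℝ (⊤ : ℕ∞) F Ξ) (n : ℕ) :
    ∀ p ∈ Ξ, P4 (DrUp n F) p = DrUp n (P4 F) p := by
  induction n with
  | zero => intro p hp; rfl
  | succ n ih =>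
    intro p hp
    simp only [DrUp_succ]
    have hW : ContDiffOn ℝ (⊤ : ℕ∞) (fun q => DrUp n F q / q.2.1) Ξ :=
      (contDiffOn_DrUp hΞ hsub hF n).div contDiff_coord21.contDiffOn hsub
    calc P4 (P2 (fun q => DrUp n F q / q.2.1)) p
        = P2 (P4 (fun q => DrUp n F q / q.2.1)) p := comm24 hΞ hW hp
      _ = P2 (fun q => DrUp n (P4 F) q / q.2.1) p := by
          refine P2_congr hΞ hp (fun q hq => ?_)
          rw [show P4 (fun q => DrUp n F q / q.2.1) q = P4 (DrUp n F) q / q.2.1 from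
            deriv_div_const _, ih q hq]

end DrOps

/-- `P2` of a difference. -/
lemma P2_sub {G H : R4 → ℝ} {p : R4}
    (hG : DifferentiableAt ℝ (fun s => G (p.1, s, p.2.2.1, p.2.2.2)) p.2.1)
    (hH : DifferentiableAt ℝ (fun s => H (p.1, s, p.2.2.1, p.2.2.2)) p.2.1) :
    P2 (fun q => G q - H q) p = P2 G p - P2 H p :=
  deriv_sub hG hH

lemma vekua_r {Ξ : Set R4} (hΞ : IsOpen Ξ) (hsub : ∀ q ∈ Ξ, q.2.1 ≠ 0)
    {U V : R4 → ℝ} (hU : ContDiffOn ℝ (⊤ : ℕ∞) U Ξ) (hV : ContDiffOn ℝ (⊤ : ℕ∞) V Ξ)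
    (hcr1 : ∀ q ∈ Ξ, P1 U q = P2 V q) (hcr2 : ∀ q ∈ Ξ, P2 U q = -P1 V q) (n : ℕ) :
    ∀ p ∈ Ξ, P1 (DrLow n U) p - P2 (DrUp n V) p = 2 * (n : ℝ) / p.2.1 * DrUp n V p
      ∧ P1 (DrUp n V) p + P2 (DrLow n U) p = 0 := by
  induction n with
  | zero =>
    intro p hp
    constructor
    · rw [DrLow_zero, DrUp_zero, hcr1 p hp]; simp
    · rw [DrLow_zero, DrUp_zero]
      have := hcr2 p hp; linarith
  | succ n ih =>
    intro p hp
    have hr := hsub p hp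
    have hAn : ContDiffOn ℝ (⊤ : ℕ∞) (DrLow n U) Ξ := contDiffOn_DrLow hΞ hsub hU n
    have hBn : ContDiffOn ℝ (⊤ : ℕ∞) (DrUp n V) Ξ := contDiffOn_DrUp hΞ hsub hV n
    have hW : ContDiffOn ℝ (⊤ : ℕ∞) (fun q => DrUp n V q / q.2.1) Ξ :=
      hBn.div contDiff_coord21.contDiffOn hsub
    have hih1 : ∀ q ∈ Ξ, P1 (DrLow n U) q
        = P2 (DrUp n V) q + 2 * (n : ℝ) / q.2.1 * DrUp n V q := by
      intro q hq; have := (ih q hq).1; linarith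
    have hih2 : ∀ q ∈ Ξ, P1 (DrUp n V) q = -P2 (DrLow n U) q := by
      intro q hq; have := (ih q hq).2; linarith
    have hBsl : DifferentiableAt ℝ (fun s => DrUp n V (p.1, s, p.2.2.1, p.2.2.2)) p.2.1 :=
      slice2_diff hΞ hBn hp
    have hPBsl : DifferentiableAt ℝ (fun s => P2 (DrUp n V) (p.1, s, p.2.2.1, p.2.2.2)) p.2.1 :=
      slice2_diff hΞ (contDiffOn_P2 hΞ hBn) hp
    have hPW : ∀ q ∈ Ξ, P2 (fun q' => DrUp n V q' / q'.2.1) q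
        = P2 (DrUp n V) q / q.2.1 - DrUp n V q / q.2.1 ^ 2 := by
      intro q hq
      rw [P2_div21 (hsub q hq) (slice2_diff hΞ hBn hq)]
      have hrq : q.2.1 ≠ 0 := hsub q hq
      field_simp
    have hBval : DrUp (n+1) V p = P2 (DrUp n V) p / p.2.1 - DrUp n V p / p.2.1 ^ 2 :=
      hPW p hp
    constructor
    · have e1 : P1 (DrLow (n+1) U) p = P2 (P1 (DrLow n U)) p / p.2.1 := by
        simp only [DrLow_succ]
        rw [P1_div21, comm12 hΞ hAn hp]
      have e2 : P2 (P1 (DrLow n U)) p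
          = P2 (P2 (DrUp n V)) p
            + (-(2 * (n : ℝ) / p.2.1 ^ 2) * DrUp n V p
              + 2 * (n : ℝ) / p.2.1 * P2 (DrUp n V) p) := by
        rw [P2_congr hΞ hp hih1]
        have hcdiv : DifferentiableAt ℝ (fun s : ℝ => 2 * (n : ℝ) / s) p.2.1 :=
          (differentiableAt_const _).div differentiableAt_fun_id hr
        have hmulsl : DifferentiableAt ℝ
            (fun s : ℝ => 2 * (n : ℝ) / s * DrUp n V (p.1, s, p.2.2.1, p.2.2.2)) p.2.1 :=
          hcdiv.mul hBsl
        rw [P2_add (G := P2 (DrUp n V)) (H := fun q => 2 * (n : ℝ) / q.2.1 * DrUp n V q)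
          hPBsl hmulsl]
        rw [P2_cdiv_mul (2 * (n : ℝ)) hr hBsl]
      have e3 : P2 (DrUp (n+1) V) p
          = (P2 (P2 (DrUp n V)) p * p.2.1 - P2 (DrUp n V) p) / p.2.1 ^ 2
            - (P2 (DrUp n V) p * p.2.1 ^ 2 - DrUp n V p * (2 * p.2.1)) / (p.2.1 ^ 2) ^ 2 := by
        simp only [DrUp_succ]
        rw [P2_congr hΞ hp hPW]
        have hq1 : DifferentiableAt ℝ
            (fun s : ℝ => P2 (DrUp n V) (p.1, s, p.2.2.1, p.2.2.2) / s) p.2.1 :=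
          hPBsl.div differentiableAt_fun_id hr
        have hq2 : DifferentiableAt ℝ
            (fun s : ℝ => DrUp n V (p.1, s, p.2.2.1, p.2.2.2) / s ^ 2) p.2.1 :=
          hBsl.div (differentiableAt_pow 2) (pow_ne_zero 2 hr)
        rw [P2_sub (G := fun q => P2 (DrUp n V) q / q.2.1) (H := fun q => DrUp n V q / q.2.1 ^ 2)
          hq1 hq2]
        rw [P2_div21 hr hPBsl, P2_div21sq hr hBsl]
      rw [e1, e2, e3, hBval]
      push_cast
      field_simp
      ring
    · have f1 : P1 (DrUp (n+1) V) p = P2 (P1 (fun q => DrUp n V q / q.2.1)) p := by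
        simp only [DrUp_succ]
        exact comm12 hΞ hW hp
      have f2 : ∀ q ∈ Ξ, P1 (fun q' => DrUp n V q' / q'.2.1) q
          = -(P2 (DrLow n U) q / q.2.1) := by
        intro q hq
        rw [P1_div21, hih2 q hq]
        ring
      have f3 : P2 (P1 (fun q => DrUp n V q / q.2.1)) p
          = -P2 (fun q => P2 (DrLow n U) q / q.2.1) p := by
        rw [P2_congr hΞ hp f2]
        exact P2_neg _ _
      rw [f1, f3]
      simp only [DrLow_succ]
      ring

/-! ### Swapping the two pairs of variables -/

def swp (q : R4) : R4 := (q.2.2.1, q.2.2.2, q.1, q.2.1)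

lemma contDiff_swp : ContDiff ℝ (⊤ : ℕ∞) swp := by unfold swp; fun_prop

section Rho
variable {Ξ : Set R4} {F G H : R4 → ℝ}

lemma swp_mem {p : R4} (hp : p ∈ Ξ) : swp p ∈ swp ⁻¹' Ξ := hp

lemma swp_smooth (hF : ContDiffOn ℝ (⊤ : ℕ∞) F Ξ) :
    ContDiffOn ℝ (⊤ : ℕ∞) (fun q => F (swp q)) (swp ⁻¹' Ξ) :=
  hF.comp contDiff_swp.contDiffOn (fun _ hq => hq)

lemma swp_sub (hsub : ∀ q ∈ Ξ, q.2.2.2 ≠ 0) : ∀ q ∈ swp ⁻¹' Ξ, q.2.1 ≠ 0 :=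
  fun q hq => hsub (swp q) hq

lemma DρLow_eq_swp (n : ℕ) (F : R4 → ℝ) :
    DρLow n F = fun p => DrLow n (fun q => F (swp q)) (swp p) := by
  funext p; rfl

lemma DρUp_eq_swp (n : ℕ) (F : R4 → ℝ) :
    DρUp n F = fun p => DrUp n (fun q => F (swp q)) (swp p) := by
  funext p; rfl

lemma contDiffOn_DρLow (hΞ : IsOpen Ξ) (hsub : ∀ q ∈ Ξ, q.2.2.2 ≠ 0)
    (hF : ContDiffOn ℝ (⊤ : ℕ∞) F Ξ) (n : ℕ) : ContDiffOn ℝ (⊤ : ℕ∞) (DρLow n F) Ξ := by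
  rw [DρLow_eq_swp]
  exact (contDiffOn_DrLow (hΞ.preimage contDiff_swp.continuous) (swp_sub hsub)
    (swp_smooth hF) n).comp contDiff_swp.contDiffOn (fun q hq => hq)

lemma contDiffOn_DρUp (hΞ : IsOpen Ξ) (hsub : ∀ q ∈ Ξ, q.2.2.2 ≠ 0)
    (hF : ContDiffOn ℝ (⊤ : ℕ∞) F Ξ) (n : ℕ) : ContDiffOn ℝ (⊤ : ℕ∞) (DρUp n F) Ξ := by
  rw [DρUp_eq_swp]
  exact (contDiffOn_DrUp (hΞ.preimage contDiff_swp.continuous) (swp_sub hsub)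
    (swp_smooth hF) n).comp contDiff_swp.contDiffOn (fun q hq => hq)

lemma DρLow_congr (hΞ : IsOpen Ξ) (h : ∀ q ∈ Ξ, G q = H q) (n : ℕ) :
    ∀ p ∈ Ξ, DρLow n G p = DρLow n H p := by
  intro p hp
  exact DrLow_congr (hΞ.preimage contDiff_swp.continuous)
    (fun q hq => h (swp q) hq) n (swp p) (swp_mem hp)

lemma DρUp_congr (hΞ : IsOpen Ξ) (h : ∀ q ∈ Ξ, G q = H q) (n : ℕ) :
    ∀ p ∈ Ξ, DρUp n G p = DρUp n H p := by
  intro p hp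
  exact DrUp_congr (hΞ.preimage contDiff_swp.continuous)
    (fun q hq => h (swp q) hq) n (swp p) (swp_mem hp)

lemma DρLow_neg (hΞ : IsOpen Ξ) (n : ℕ) :
    ∀ p ∈ Ξ, DρLow n (fun q => -G q) p = -DρLow n G p := by
  intro p hp
  exact DrLow_neg (G := fun q => G (swp q)) (hΞ.preimage contDiff_swp.continuous)
    n (swp p) (swp_mem hp)

lemma DρUp_neg (hΞ : IsOpen Ξ) (n : ℕ) :
    ∀ p ∈ Ξ, DρUp n (fun q => -G q) p = -DρUp n G p := by
  intro p hp
  exact DrUp_neg (G := fun q => G (swp q)) (hΞ.preimage contDiff_swp.continuous)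
    n (swp p) (swp_mem hp)

lemma commP1_DρLow (hΞ : IsOpen Ξ) (hsub : ∀ q ∈ Ξ, q.2.2.2 ≠ 0)
    (hF : ContDiffOn ℝ (⊤ : ℕ∞) F Ξ) (n : ℕ) :
    ∀ p ∈ Ξ, P1 (DρLow n F) p = DρLow n (P1 F) p := by
  intro p hp
  exact commP3_DrLow (hΞ.preimage contDiff_swp.continuous) (swp_sub hsub)
    (swp_smooth hF) n (swp p) (swp_mem hp)

lemma commP2_DρLow (hΞ : IsOpen Ξ) (hsub : ∀ q ∈ Ξ, q.2.2.2 ≠ 0)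
    (hF : ContDiffOn ℝ (⊤ : ℕ∞) F Ξ) (n : ℕ) :
    ∀ p ∈ Ξ, P2 (DρLow n F) p = DρLow n (P2 F) p := by
  intro p hp
  exact commP4_DrLow (hΞ.preimage contDiff_swp.continuous) (swp_sub hsub)
    (swp_smooth hF) n (swp p) (swp_mem hp)

lemma commP1_DρUp (hΞ : IsOpen Ξ) (hsub : ∀ q ∈ Ξ, q.2.2.2 ≠ 0)
    (hF : ContDiffOn ℝ (⊤ : ℕ∞) F Ξ) (n : ℕ) :
    ∀ p ∈ Ξ, P1 (DρUp n F) p = DρUp n (P1 F) p := by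
  intro p hp
  exact commP3_DrUp (hΞ.preimage contDiff_swp.continuous) (swp_sub hsub)
    (swp_smooth hF) n (swp p) (swp_mem hp)

lemma commP2_DρUp (hΞ : IsOpen Ξ) (hsub : ∀ q ∈ Ξ, q.2.2.2 ≠ 0)
    (hF : ContDiffOn ℝ (⊤ : ℕ∞) F Ξ) (n : ℕ) :
    ∀ p ∈ Ξ, P2 (DρUp n F) p = DρUp n (P2 F) p := by
  intro p hp
  exact commP4_DrUp (hΞ.preimage contDiff_swp.continuous) (swp_sub hsub)
    (swp_smooth hF) n (swp p) (swp_mem hp)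

lemma vekua_rho (hΞ : IsOpen Ξ) (hsub : ∀ q ∈ Ξ, q.2.2.2 ≠ 0)
    {U V : R4 → ℝ} (hU : ContDiffOn ℝ (⊤ : ℕ∞) U Ξ) (hV : ContDiffOn ℝ (⊤ : ℕ∞) V Ξ)
    (hcr1 : ∀ q ∈ Ξ, P3 U q = P4 V q) (hcr2 : ∀ q ∈ Ξ, P4 U q = -P3 V q) (n : ℕ) :
    ∀ p ∈ Ξ, P3 (DρLow n U) p - P4 (DρUp n V) p = 2 * (n : ℝ) / p.2.2.2 * DρUp n V p
      ∧ P3 (DρUp n V) p + P4 (DρLow n U) p = 0 := by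
  intro p hp
  exact vekua_r (hΞ.preimage contDiff_swp.continuous) (swp_sub hsub)
    (swp_smooth hU) (swp_smooth hV)
    (fun q hq => hcr1 (swp q) hq) (fun q hq => hcr2 (swp q) hq) n (swp p) (swp_mem hp)

lemma contDiff_coord44 : ContDiff ℝ (⊤ : ℕ∞) (fun q : R4 => q.2.2.2) := by fun_prop

end Rho


end Aux

theorem vekua_system (Ξ : Set (ℝ × ℝ × ℝ × ℝ)) (hΞ : IsOpen Ξ)
    (hΞsub : Ξ ⊆ Set.univ ×ˢ Set.Ioi (0 : ℝ) ×ˢ Set.univ ×ˢ Set.Ioi (0 : ℝ))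
    (u₁ v₁ u₂ v₂ : ℝ × ℝ × ℝ × ℝ → ℝ)
    (hu₁ : ContDiffOn ℝ (⊤ : ℕ∞) u₁ Ξ) (hv₁ : ContDiffOn ℝ (⊤ : ℕ∞) v₁ Ξ)
    (hu₂ : ContDiffOn ℝ (⊤ : ℕ∞) u₂ Ξ) (hv₂ : ContDiffOn ℝ (⊤ : ℕ∞) v₂ Ξ)
    (hCR₁ : ∀ p ∈ Ξ, P1 u₁ p = P2 v₁ p) (hCR₂ : ∀ p ∈ Ξ, P2 u₁ p = -P1 v₁ p)
    (hCR₃ : ∀ p ∈ Ξ, P1 u₂ p = P2 v₂ p) (hCR₄ : ∀ p ∈ Ξ, P2 u₂ p = -P1 v₂ p)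
    (hCR₅ : ∀ p ∈ Ξ, P3 u₁ p = P4 u₂ p) (hCR₆ : ∀ p ∈ Ξ, P4 u₁ p = -P3 u₂ p)
    (hCR₇ : ∀ p ∈ Ξ, P3 v₁ p = P4 v₂ p) (hCR₈ : ∀ p ∈ Ξ, P4 v₁ p = -P3 v₂ p)
    (n n' : ℕ) (hn : 1 ≤ n) (hn' : 1 ≤ n')
    (A B C D : ℝ × ℝ × ℝ × ℝ → ℝ)
    (hA : A = DrLow n (DρLow n' u₁)) (hB : B = DrUp n (DρLow n' v₁))
    (hC : C = DrLow n (DρUp n' u₂)) (hD : D = DrUp n (DρUp n' v₂))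
    (p : ℝ × ℝ × ℝ × ℝ) (hp : p ∈ Ξ) :
    P1 A p - P2 B p = 2 * (n : ℝ) / p.2.1 * B p ∧
    P1 B p + P2 A p = 0 ∧
    P1 C p - P2 D p = 2 * (n : ℝ) / p.2.1 * D p ∧
    P1 D p + P2 C p = 0 ∧
    P3 A p - P4 C p = 2 * (n' : ℝ) / p.2.2.2 * C p ∧
    P3 C p + P4 A p = 0 ∧
    P3 B p - P4 D p = 2 * (n' : ℝ) / p.2.2.2 * D p ∧
    P3 D p + P4 B p = 0 := by
  subst hA hB hC hD
  have hsubr : ∀ q ∈ Ξ, q.2.1 ≠ 0 := by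
    intro q hq
    have h := hΞsub hq
    simp only [Set.mem_prod, Set.mem_univ, Set.mem_Ioi, true_and] at h
    exact ne_of_gt h.1
  have hsubρ : ∀ q ∈ Ξ, q.2.2.2 ≠ 0 := by
    intro q hq
    have h := hΞsub hq
    simp only [Set.mem_prod, Set.mem_univ, Set.mem_Ioi, true_and] at h
    exact ne_of_gt h.2
  have hU1 : ContDiffOn ℝ (⊤ : ℕ∞) (DρLow n' u₁) Ξ := contDiffOn_DρLow hΞ hsubρ hu₁ n'
  have hV1 : ContDiffOn ℝ (⊤ : ℕ∞) (DρLow n' v₁) Ξ := contDiffOn_DρLow hΞ hsubρ hv₁ n'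
  have hU2 : ContDiffOn ℝ (⊤ : ℕ∞) (DρUp n' u₂) Ξ := contDiffOn_DρUp hΞ hsubρ hu₂ n'
  have hV2 : ContDiffOn ℝ (⊤ : ℕ∞) (DρUp n' v₂) Ξ := contDiffOn_DρUp hΞ hsubρ hv₂ n'
  -- Cauchy–Riemann for the pair (DρLow n' u₁, DρLow n' v₁) in the variables (x₀, r)
  have hcrA1 : ∀ q ∈ Ξ, P1 (DρLow n' u₁) q = P2 (DρLow n' v₁) q := by
    intro q hq
    rw [commP1_DρLow hΞ hsubρ hu₁ n' q hq, commP2_DρLow hΞ hsubρ hv₁ n' q hq]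
    exact DρLow_congr hΞ hCR₁ n' q hq
  have hcrA2 : ∀ q ∈ Ξ, P2 (DρLow n' u₁) q = -P1 (DρLow n' v₁) q := by
    intro q hq
    rw [commP2_DρLow hΞ hsubρ hu₁ n' q hq, commP1_DρLow hΞ hsubρ hv₁ n' q hq]
    rw [DρLow_congr hΞ hCR₂ n' q hq, DρLow_neg hΞ n' q hq]
  -- Cauchy–Riemann for the pair (DρUp n' u₂, DρUp n' v₂) in the variables (x₀, r)
  have hcrB1 : ∀ q ∈ Ξ, P1 (DρUp n' u₂) q = P2 (DρUp n' v₂) q := by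
    intro q hq
    rw [commP1_DρUp hΞ hsubρ hu₂ n' q hq, commP2_DρUp hΞ hsubρ hv₂ n' q hq]
    exact DρUp_congr hΞ hCR₃ n' q hq
  have hcrB2 : ∀ q ∈ Ξ, P2 (DρUp n' u₂) q = -P1 (DρUp n' v₂) q := by
    intro q hq
    rw [commP2_DρUp hΞ hsubρ hu₂ n' q hq, commP1_DρUp hΞ hsubρ hv₂ n' q hq]
    rw [DρUp_congr hΞ hCR₄ n' q hq, DρUp_neg hΞ n' q hq]
  have goal12 := vekua_r hΞ hsubr hU1 hV1 hcrA1 hcrA2 n p hp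
  have goal34 := vekua_r hΞ hsubr hU2 hV2 hcrB1 hcrB2 n p hp
  -- the identities in the (y₀, ρ) variables
  have hρU := vekua_rho hΞ hsubρ hu₁ hu₂ hCR₅ hCR₆ n'
  have hρV := vekua_rho hΞ hsubρ hv₁ hv₂ hCR₇ hCR₈ n'
  have hprodU : ContDiffOn ℝ (⊤ : ℕ∞) (fun q => 2 * (n' : ℝ) / q.2.2.2 * DρUp n' u₂ q) Ξ :=
    (ContDiffOn.div contDiffOn_const contDiff_coord44.contDiffOn hsubρ).mul hU2
  have hprodV : ContDiffOn ℝ (⊤ : ℕ∞) (fun q => 2 * (n' : ℝ) / q.2.2.2 * DρUp n' v₂ q) Ξ :=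
    (ContDiffOn.div contDiffOn_const contDiff_coord44.contDiffOn hsubρ).mul hV2
  -- goal 5
  have h3eqU : ∀ q ∈ Ξ, P3 (DρLow n' u₁) q
      = P4 (DρUp n' u₂) q + 2 * (n' : ℝ) / q.2.2.2 * DρUp n' u₂ q := by
    intro q hq; have := (hρU q hq).1; linarith
  have g5 : P3 (DrLow n (DρLow n' u₁)) p
      = P4 (DrLow n (DρUp n' u₂)) p + 2 * (n' : ℝ) / p.2.2.2 * DrLow n (DρUp n' u₂) p := by
    rw [commP3_DrLow hΞ hsubr hU1 n p hp, DrLow_congr hΞ h3eqU n p hp,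
      DrLow_add hΞ hsubr (contDiffOn_P4 hΞ hU2) hprodU n p hp,
      commP4_DrLow hΞ hsubr hU2 n p hp]
    have hs : DrLow n (fun q => 2 * (n' : ℝ) / q.2.2.2 * DρUp n' u₂ q) p
        = 2 * (n' : ℝ) / p.2.2.2 * DrLow n (DρUp n' u₂) p :=
      DrLow_smul hΞ (fun t => 2 * (n' : ℝ) / t) n p hp
    rw [hs]
  -- goal 6
  have h3eqU2 : ∀ q ∈ Ξ, P3 (DρUp n' u₂) q = -P4 (DρLow n' u₁) q := by
    intro q hq; have := (hρU q hq).2; linarith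
  have g6 : P3 (DrLow n (DρUp n' u₂)) p = -P4 (DrLow n (DρLow n' u₁)) p := by
    rw [commP3_DrLow hΞ hsubr hU2 n p hp, DrLow_congr hΞ h3eqU2 n p hp,
      DrLow_neg hΞ n p hp, commP4_DrLow hΞ hsubr hU1 n p hp]
  -- goal 7
  have h3eqV : ∀ q ∈ Ξ, P3 (DρLow n' v₁) q
      = P4 (DρUp n' v₂) q + 2 * (n' : ℝ) / q.2.2.2 * DρUp n' v₂ q := by
    intro q hq; have := (hρV q hq).1; linarith
  have g7 : P3 (DrUp n (DρLow n' v₁)) p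
      = P4 (DrUp n (DρUp n' v₂)) p + 2 * (n' : ℝ) / p.2.2.2 * DrUp n (DρUp n' v₂) p := by
    rw [commP3_DrUp hΞ hsubr hV1 n p hp, DrUp_congr hΞ h3eqV n p hp,
      DrUp_add hΞ hsubr (contDiffOn_P4 hΞ hV2) hprodV n p hp,
      commP4_DrUp hΞ hsubr hV2 n p hp]
    have hs : DrUp n (fun q => 2 * (n' : ℝ) / q.2.2.2 * DρUp n' v₂ q) p
        = 2 * (n' : ℝ) / p.2.2.2 * DrUp n (DρUp n' v₂) p :=
      DrUp_smul hΞ (fun t => 2 * (n' : ℝ) / t) n p hp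
    rw [hs]
  -- goal 8
  have h3eqV2 : ∀ q ∈ Ξ, P3 (DρUp n' v₂) q = -P4 (DρLow n' v₁) q := by
    intro q hq; have := (hρV q hq).2; linarith
  have g8 : P3 (DrUp n (DρUp n' v₂)) p = -P4 (DrUp n (DρLow n' v₁)) p := by
    rw [commP3_DrUp hΞ hsubr hV2 n p hp, DrUp_congr hΞ h3eqV2 n p hp,
      DrUp_neg hΞ n p hp, commP4_DrUp hΞ hsubr hV1 n p hp]
  refine ⟨goal12.1, goal12.2, goal34.1, goal34.2, by linarith [g5], by linarith [g6],
    by linarith [g7], by linarith [g8]⟩
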